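/- arXiv:1406.6928 — 8 statements merged into one kernel-verified Lean document; each statement's English description precedes it below -/
import Mathlib

section
/- Let k be a positive integer with k < rank(T). Then the image of K_T is all of U, i.e., the K-linear span of the vectors K_T(f₁,…,f_k; v₁,…,v_{k+1}) over all choices of f₁,…,f_k ∈ V* and v₁,…,v_{k+1} ∈ U equals U. -/
open Finset

/-- The map `K_T` from the paper: for `f₁,…,f_k ∈ V*` and `v₁,…,v_{k+1} ∈ U`,
`K_T(f₁,…,f_k; v₁,…,v_{k+1}) = Σ_{σ ∈ S_{k+1}} sign(σ) · Π_i f_i(T(v_{σ(i)})) · v_{σ(k+1)}`. -/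
noncomputable def paperKT {K U V : Type*} [Field K] [AddCommGroup U] [Module K U]
    [AddCommGroup V] [Module K V] (T : U →ₗ[K] V) (k : ℕ)
    (f : Fin k → (V →ₗ[K] K)) (v : Fin (k + 1) → U) : U :=
  ∑ σ : Equiv.Perm (Fin (k + 1)),
    ((Equiv.Perm.sign σ : ℤ) : K) •
      (∏ i : Fin k, f i (T (v (σ i.castSucc)))) • v (σ (Fin.last k))

/-!
Every `w ∈ U` is itself a value of `K_T`. Since `rank T > k`, the image of `T` stays of dimension
at least `k` modulo the line `K ∙ T w`, so there are `v₁,…,v_k` whose images `T vᵢ` are independent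
modulo `T w`, together with functionals `fᵢ` dual to them and vanishing on `T w`. In
`K_T(f; v₁,…,v_k, w)` every permutation other than the identity then contributes a zero factor,
and the identity contributes exactly `w`.
-/

open Module Submodule

theorem Equiv.Perm.eq_one_of_forall_castSucc {n : ℕ} {σ : Equiv.Perm (Fin (n + 1))}
    (h : ∀ i : Fin n, σ i.castSucc = i.castSucc) : σ = 1 := by
  have hlast : σ (Fin.last n) = Fin.last n := by
    obtain ⟨i, hi⟩ | hi := Fin.eq_castSucc_or_eq_last (σ (Fin.last n))
    · exact absurd (σ.injective (hi.trans (h i).symm)) (Fin.castSucc_lt_last i).ne'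
    · exact hi
  ext j
  induction j using Fin.lastCases with
  | last => simp [hlast]
  | cast i => simp [h i]

theorem LinearIndependent.exists_biorthogonal_dual {K V ι : Type*} [Field K] [AddCommGroup V]
    [Module K V] [DecidableEq ι] {y : ι → V} (hy : LinearIndependent K y) :
    ∃ f : ι → Dual K V, ∀ i j, f i (y j) = if i = j then 1 else 0 := by
  obtain ⟨g, hg⟩ := (Finsupp.linearCombination K y).exists_leftInverse_of_injective
    (LinearMap.ker_eq_bot.mpr hy)
  refine ⟨fun i => Finsupp.lapply i ∘ₗ g, fun i j => ?_⟩
  have hgy : g (y j) = Finsupp.single j 1 := by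
    simpa using LinearMap.congr_fun hg (Finsupp.single j 1)
  simp [hgy, Finsupp.single_apply, eq_comm]

theorem LinearMap.exists_linearIndependent_comp_of_le_finrank_range {K U V : Type*} [Field K]
    [AddCommGroup U] [Module K U] [AddCommGroup V] [Module K V] (S : U →ₗ[K] V) {n : ℕ}
    (hn : n ≤ finrank K (LinearMap.range S)) : ∃ v : Fin n → U, LinearIndependent K (S ∘ v) := by
  obtain ⟨y, hy⟩ := exists_linearIndependent_of_le_finrank hn
  choose v hv using fun i => S.surjective_rangeRestrict (y i)
  refine ⟨v, ?_⟩
  have hSv : S ∘ v = (LinearMap.range S).subtype ∘ y := funext fun i => congrArg Subtype.val (hv i)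
  rw [hSv]
  exact hy.map' _ (ker_subtype _)

theorem Submodule.finrank_map_add_finrank_inf_ker {K V V₂ : Type*} [Field K] [AddCommGroup V]
    [Module K V] [AddCommGroup V₂] [Module K V₂] (f : V →ₗ[K] V₂) (p : Submodule K V)
    [FiniteDimensional K p] :
    finrank K (p.map f) + finrank K (p ⊓ LinearMap.ker f : Submodule K V) = finrank K p := by
  rw [← LinearMap.range_domRestrict, ← map_comap_subtype, finrank_map_subtype_eq,
    ← LinearMap.ker_domRestrict]
  exact (f.domRestrict p).finrank_range_add_finrank_ker

theorem LinearMap.finrank_range_le_finrank_range_mkQ_comp_add_one {K U V : Type*} [Field K]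
    [AddCommGroup U] [Module K U] [AddCommGroup V] [Module K V] (T : U →ₗ[K] V)
    [FiniteDimensional K (LinearMap.range T)] (x : V) :
    finrank K (LinearMap.range T) ≤ finrank K (LinearMap.range ((K ∙ x).mkQ ∘ₗ T)) + 1 := by
  have hline : finrank K (LinearMap.range T ⊓ (K ∙ x) : Submodule K V) ≤ 1 :=
    (finrank_mono inf_le_right).trans (by simpa using finrank_span_le_card ({x} : Set V))
  have hsum := (LinearMap.range T).finrank_map_add_finrank_inf_ker (K ∙ x).mkQ
  rw [ker_mkQ] at hsum
  rw [range_comp]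
  omega

theorem LinearMap.exists_biorthogonal_vanishing_at {K U V : Type*} [Field K]
    [AddCommGroup U] [Module K U] [AddCommGroup V] [Module K V]
    (T : U →ₗ[K] V) {k : ℕ} (hk : k < finrank K (LinearMap.range T)) (w : U) :
    ∃ (v : Fin k → U) (f : Fin k → Dual K V),
      (∀ i j, f i (T (v j)) = if i = j then 1 else 0) ∧ ∀ i, f i (T w) = 0 := by
  have : FiniteDimensional K (LinearMap.range T) := finite_of_finrank_pos (Nat.zero_lt_of_lt hk)
  obtain ⟨v, hv⟩ := ((K ∙ T w).mkQ ∘ₗ T).exists_linearIndependent_comp_of_le_finrank_range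
    (Nat.le_of_lt_succ (hk.trans_le (T.finrank_range_le_finrank_range_mkQ_comp_add_one (T w))))
  obtain ⟨g, hg⟩ := hv.exists_biorthogonal_dual
  refine ⟨v, fun i => g i ∘ₗ (K ∙ T w).mkQ, fun i j => hg i j, fun i => ?_⟩
  simp [(Quotient.mk_eq_zero _).mpr (mem_span_singleton_self (T w))]

theorem paperKT_snoc_eq {K U V : Type*} [Field K] [AddCommGroup U] [Module K U]
    [AddCommGroup V] [Module K V] (T : U →ₗ[K] V) {k : ℕ}
    (f : Fin k → Dual K V) (v : Fin k → U) (w : U)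
    (hf : ∀ i j, f i (T (v j)) = if i = j then 1 else 0) (hw : ∀ i, f i (T w) = 0) :
    paperKT T k f (Fin.snoc v w) = w := by
  have hdelta : ∀ i j, f i (T (Fin.snoc (α := fun _ => U) v w j)) =
      if j = i.castSucc then 1 else 0 := by
    intro i j
    induction j using Fin.lastCases with
    | last => simp [hw, (Fin.castSucc_lt_last i).ne']
    | cast j => simp [hf, eq_comm]
  unfold paperKT
  rw [Fintype.sum_eq_single 1]
  · simp [hf]
  · intro σ hσ
    obtain ⟨i, hi⟩ : ∃ i : Fin k, σ i.castSucc ≠ i.castSucc := by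
      by_contra! h
      exact hσ (Equiv.Perm.eq_one_of_forall_castSucc h)
    rw [Finset.prod_eq_zero (mem_univ i) (by simp [hdelta, hi]), zero_smul, smul_zero]

theorem paperKT_span_eq_top_general {K U V : Type*} [Field K]
    [AddCommGroup U] [Module K U]
    [AddCommGroup V] [Module K V]
    (T : U →ₗ[K] V) (k : ℕ)
    (hlt : k < Module.finrank K (LinearMap.range T)) :
    Submodule.span K
      {u : U | ∃ (f : Fin k → (V →ₗ[K] K)) (v : Fin (k + 1) → U), u = paperKT T k f v} = ⊤ := by
  refine eq_top_iff.mpr fun w _ => subset_span ?_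
  obtain ⟨v, f, hf, hw⟩ := LinearMap.exists_biorthogonal_vanishing_at T hlt w
  exact ⟨f, Fin.snoc v w, (paperKT_snoc_eq T f v w hf hw).symm⟩

/-- If `0 < k < rank T`, the span of the image of `K_T` is all of `U`. -/
theorem paperKT_span_eq_top {K U V : Type*} [Field K] [CharZero K]
    [AddCommGroup U] [Module K U] [FiniteDimensional K U]
    [AddCommGroup V] [Module K V] [FiniteDimensional K V]
    (T : U →ₗ[K] V) (k : ℕ) (hk : 0 < k)
    (hlt : k < Module.finrank K (LinearMap.range T)) :
    Submodule.span K
      {u : U | ∃ (f : Fin k → (V →ₗ[K] K)) (v : Fin (k + 1) → U), u = paperKT T k f v} = ⊤ :=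
  paperKT_span_eq_top_general T k hlt
end

section
/- Let k be a positive integer with k = rank(T). Then the image of K_T equals the kernel of T, i.e., the K-linear span of the vectors K_T(f₁,…,f_k; v₁,…,v_{k+1}) over all choices of f₁,…,f_k ∈ V* and v₁,…,v_{k+1} ∈ U is exactly ker(T). -/
/-!
For `g ∈ V*`, `g (T (K_T(f; v)))` is the Leibniz expansion of the `(k+1) × (k+1)` determinant
`det (ψ_j (T v_i))` with `ψ = (f₁, …, f_k, g)`. The `k + 1` vectors `T v_i` lie in the
`k`-dimensional range of `T`, so they are dependent, the determinant vanishes, and `K_T` takes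
values in `ker T`. Conversely, pick `w_j ∈ U` and `f_i ∈ V*` with `f_i (T w_j) = δ_ij`; for
`u ∈ ker T`, in `K_T(f; w₁, …, w_k, u)` every permutation other than the identity has a vanishing
factor, so the sum is `u`.
-/

open Finset

theorem Matrix.det_of_dual_apply_eq_zero_of_not_linearIndependent {R M n : Type*}
    [CommRing R] [IsDomain R] [AddCommGroup M] [Module R M] [Fintype n] [DecidableEq n]
    (φ : n → Module.Dual R M) {x : n → M} (hx : ¬LinearIndependent R x) :
    (Matrix.of fun i j => φ j (x i)).det = 0 := by
  obtain ⟨c, hc, i, hci⟩ := Fintype.not_linearIndependent_iff.mp hx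
  refine Matrix.exists_vecMul_eq_zero_iff.mp ⟨c, fun h => hci (congrFun h i), funext fun j => ?_⟩
  simpa [Matrix.vecMul, dotProduct] using congrArg (φ j) hc

theorem LinearMap.not_linearIndependent_comp_of_finrank_range_lt {K U V ι : Type*} [Field K]
    [AddCommGroup U] [Module K U] [AddCommGroup V] [Module K V] [Fintype ι]
    (T : U →ₗ[K] V) [FiniteDimensional K (LinearMap.range T)]
    (h : Module.finrank K (LinearMap.range T) < Fintype.card ι) (v : ι → U) :
    ¬LinearIndependent K (T ∘ v) := fun hv =>
  (hv.of_comp (R := K) (v := T.rangeRestrict ∘ v) (LinearMap.range T).subtype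
    |>.fintype_card_le_finrank).not_gt h

theorem Equiv.Perm.exists_castSucc_apply_ne_of_ne_one {n : ℕ} {σ : Equiv.Perm (Fin (n + 1))}
    (hσ : σ ≠ 1) : ∃ i : Fin n, σ i.castSucc ≠ i.castSucc := by
  by_contra! h
  refine hσ (card_support_le_one.mp ?_)
  refine (Finset.card_le_card (t := {Fin.last n}) fun x hx => ?_).trans (card_singleton _).le
  induction x using Fin.lastCases with
  | last => exact mem_singleton_self _
  | cast j => exact absurd (h j) (mem_support.mp hx)

section

variable {K U V : Type*} [Field K] [AddCommGroup U] [Module K U] [AddCommGroup V] [Module K V]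
  (T : U →ₗ[K] V) {k : ℕ}

theorem dual_apply_paperKT_eq_det (f : Fin k → Module.Dual K V) (g : Module.Dual K V)
    (v : Fin (k + 1) → U) :
    g (T (paperKT T k f v)) =
      (Matrix.of fun i j => (Fin.snoc f g : Fin (k + 1) → Module.Dual K V) j (T (v i))).det := by
  simp only [paperKT, Matrix.det_apply', map_sum, map_smul, Fin.prod_univ_castSucc,
    Matrix.of_apply, Fin.snoc_castSucc, Fin.snoc_last, smul_eq_mul]

theorem paperKT_mem_ker [FiniteDimensional K (LinearMap.range T)]
    (hk : Module.finrank K (LinearMap.range T) = k) (f : Fin k → Module.Dual K V)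
    (v : Fin (k + 1) → U) : paperKT T k f v ∈ LinearMap.ker T := by
  refine (Module.forall_dual_apply_eq_zero_iff K _).mp fun g => ?_
  rw [dual_apply_paperKT_eq_det]
  exact Matrix.det_of_dual_apply_eq_zero_of_not_linearIndependent _
    (T.not_linearIndependent_comp_of_finrank_range_lt (by simp [hk]) v)

theorem exists_biorthogonal_of_finrank_range_eq [FiniteDimensional K (LinearMap.range T)]
    (hk : Module.finrank K (LinearMap.range T) = k) :
    ∃ (w : Fin k → U) (f : Fin k → Module.Dual K V),
      ∀ i j, f i (T (w j)) = if i = j then 1 else 0 := by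
  let b := Module.finBasisOfFinrankEq K _ hk
  choose w hw using fun j => (b j).2
  choose f hf using fun i => LinearMap.exists_extend (b.coord i)
  refine ⟨w, f, fun i j => ?_⟩
  have : f i (T (w j)) = b.coord i (b j) := by
    rw [← hf i, LinearMap.comp_apply, Submodule.subtype_apply, hw j]
  rw [this, b.coord_apply, b.repr_self, Finsupp.single_apply]
  exact if_congr eq_comm rfl rfl

theorem paperKT_snoc_of_biorthogonal {w : Fin k → U} {f : Fin k → Module.Dual K V}
    (hfw : ∀ i j, f i (T (w j)) = if i = j then 1 else 0) {u : U} (hu : u ∈ LinearMap.ker T) :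
    paperKT T k f (Fin.snoc w u) = u := by
  rw [paperKT, Finset.sum_eq_single 1 ?_ (by simp)]
  · simp [hfw]
  intro σ _ hσ
  obtain ⟨i, hi⟩ := Equiv.Perm.exists_castSucc_apply_ne_of_ne_one hσ
  have : f i (T ((Fin.snoc w u : Fin (k + 1) → U) (σ i.castSucc))) = 0 := by
    cases h : σ i.castSucc using Fin.lastCases with
    | last => rw [Fin.snoc_last, hu, map_zero]
    | cast j => rw [Fin.snoc_castSucc, hfw, if_neg (by rintro rfl; exact hi h)]
  rw [Finset.prod_eq_zero (mem_univ i) this, zero_smul, smul_zero]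

end

theorem paperKT_span_eq_ker_general {K U V : Type*} [Field K]
    [AddCommGroup U] [Module K U]
    [AddCommGroup V] [Module K V] [FiniteDimensional K V]
    (T : U →ₗ[K] V) (k : ℕ)
    (heq : k = Module.finrank K (LinearMap.range T)) :
    Submodule.span K
      {u : U | ∃ (f : Fin k → (V →ₗ[K] K)) (v : Fin (k + 1) → U), u = paperKT T k f v}
      = LinearMap.ker T := by
  refine le_antisymm (Submodule.span_le.mpr ?_) fun u hu => Submodule.subset_span ?_
  · rintro _ ⟨f, v, rfl⟩
    exact paperKT_mem_ker T heq.symm f v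
  · obtain ⟨w, f, hfw⟩ := exists_biorthogonal_of_finrank_range_eq T heq.symm
    exact ⟨f, Fin.snoc w u, (paperKT_snoc_of_biorthogonal T hfw hu).symm⟩

/-- If `0 < k = rank T`, the span of the image of `K_T` is exactly the kernel of `T`. -/
theorem paperKT_span_eq_ker {K U V : Type*} [Field K] [CharZero K]
    [AddCommGroup U] [Module K U] [FiniteDimensional K U]
    [AddCommGroup V] [Module K V] [FiniteDimensional K V]
    (T : U →ₗ[K] V) (k : ℕ) (hk : 0 < k)
    (heq : k = Module.finrank K (LinearMap.range T)) :
    Submodule.span K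
      {u : U | ∃ (f : Fin k → (V →ₗ[K] K)) (v : Fin (k + 1) → U), u = paperKT T k f v}
      = LinearMap.ker T :=
  paperKT_span_eq_ker_general T k heq
end

section
/- Let k be a positive integer with k > rank(T). Then the image of K_T is zero, i.e., every vector K_T(f₁,…,f_k; v₁,…,v_{k+1}) vanishes. -/
open Finset
open scoped Matrix

/-- If `k > rank T`, every vector `K_T(f₁,…,f_k; v₁,…,v_{k+1})` vanishes. -/
theorem paperKT_eq_zero {K U V : Type*} [Field K] [CharZero K]
    [AddCommGroup U] [Module K U] [FiniteDimensional K U]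
    [AddCommGroup V] [Module K V] [FiniteDimensional K V]
    (T : U →ₗ[K] V) (k : ℕ) (hk : 0 < k)
    (hgt : Module.finrank K (LinearMap.range T) < k)
    (f : Fin k → (V →ₗ[K] K)) (v : Fin (k + 1) → U) :
    paperKT T k f v = 0 := by
  classical
  set g : Fin k → (U →ₗ[K] K) := fun i => (f i).comp T with hgdef
  have hdep : ¬ LinearIndependent K g := by
    intro hli
    have h1 : Module.finrank K (Submodule.span K (Set.range g)) = k := by
      simpa using finrank_span_eq_card hli
    have h2 : Submodule.span K (Set.range g) ≤ LinearMap.range T.dualMap := by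
      rw [Submodule.span_le]
      rintro _ ⟨i, rfl⟩
      exact ⟨f i, rfl⟩
    have h3 := Submodule.finrank_mono h2
    rw [h1, LinearMap.finrank_range_dualMap_eq_finrank_range] at h3
    exact absurd (lt_of_le_of_lt h3 hgt) (lt_irrefl k)
  obtain ⟨c, hc, i0, hi0⟩ := Fintype.not_linearIndependent_iff.mp hdep
  refine (Module.forall_dual_apply_eq_zero_iff K _).mp ?_
  intro φ
  set h : Fin (k + 1) → (U →ₗ[K] K) := Fin.snoc g φ with hhdef
  set M : Matrix (Fin (k + 1)) (Fin (k + 1)) K := Matrix.of fun i j => h i (v j) with hMdef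
  have hdet : φ (paperKT T k f v) = M.transpose.det := by
    rw [Matrix.det_apply']
    rw [paperKT, map_sum]
    refine Finset.sum_congr rfl fun σ _ => ?_
    rw [map_smul, map_smul, smul_eq_mul, smul_eq_mul]
    congr 1
    have : ∏ i : Fin (k + 1), M.transpose (σ i) i = ∏ i : Fin (k + 1), h i (v (σ i)) := by
      refine Finset.prod_congr rfl fun i _ => rfl
    rw [this, Fin.prod_univ_castSucc]
    simp [hhdef, hgdef]
  rw [hdet, Matrix.det_transpose]
  rw [← Matrix.exists_vecMul_eq_zero_iff]
  refine ⟨Fin.snoc c 0, ?_, ?_⟩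
  · intro hcz
    apply hi0
    have := congrFun hcz i0.castSucc
    simpa using this
  · funext j
    have : ((Fin.snoc c 0 : Fin (k+1) → K) ᵥ* M) j
        = (∑ i : Fin (k + 1), (Fin.snoc c 0 : Fin (k+1) → K) i • h i) (v j) := by
      simp [Matrix.vecMul, dotProduct, hMdef, LinearMap.sum_apply, LinearMap.smul_apply,
        smul_eq_mul]
    show ((Fin.snoc c 0 : Fin (k+1) → K) ᵥ* M) j = (0 : Fin (k+1) → K) j
    rw [this]
    have hz : (∑ i : Fin (k + 1), (Fin.snoc c 0 : Fin (k+1) → K) i • h i) = 0 := by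
      rw [Fin.sum_univ_castSucc]
      simp [hhdef, hc]
    rw [hz]
    rfl
end

section
/- Under these hypotheses, the category A is an abelian category. -/
open CategoryTheory CategoryTheory.Limits

/-- Let `A` be an additive category with kernels and cokernels, `B` an abelian category, and
`F : A ⥤ B` an additive faithful functor which preserves kernels and cokernels and reflects
isomorphisms.  Then `A` is an abelian category. -/
theorem abelian_of_faithful_functor_to_abelian
    {A : Type*} [Category A] [Preadditive A] [HasFiniteBiproducts A]
    [HasKernels A] [HasCokernels A]
    {B : Type*} [Category B] [Abelian B]
    (F : A ⥤ B) [F.Additive] [F.Faithful] [F.ReflectsIsomorphisms]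
    (hker : ∀ {X Y : A} (f : X ⟶ Y), PreservesLimit (parallelPair f 0) F)
    (hcoker : ∀ {X Y : A} (f : X ⟶ Y), PreservesColimit (parallelPair f 0) F) :
    Nonempty (Abelian A) := by
  haveI : ∀ {X Y : A} (f : X ⟶ Y), IsIso (Abelian.coimageImageComparison f) := by
    intro X Y f
    haveI := hker f
    haveI := hker (cokernel.π f)
    haveI := hcoker f
    haveI := hcoker (kernel.ι f)
    -- comparison isos
    let kIso : F.obj (kernel f) ≅ kernel (F.map f) := PreservesKernel.iso F f
    let cokIso : F.obj (cokernel f) ≅ cokernel (F.map f) := PreservesCokernel.iso F f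
    have hk : kIso.hom ≫ kernel.ι (F.map f) = F.map (kernel.ι f) := by
      simp [kIso, PreservesKernel.iso_hom]
    have hcok : cokernel.π (F.map f) ≫ cokIso.inv = F.map (cokernel.π f) := by
      simp [cokIso, PreservesCokernel.iso_inv]
    have hcok' : F.map (cokernel.π f) ≫ cokIso.hom = cokernel.π (F.map f) := by
      rw [← hcok]; simp
    let coimIso : F.obj (Abelian.coimage f) ≅ Abelian.coimage (F.map f) :=
      PreservesCokernel.iso F (kernel.ι f) ≪≫
        cokernel.mapIso (F.map (kernel.ι f)) (kernel.ι (F.map f)) kIso (Iso.refl _)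
          (by simpa using hk.symm)
    let imIso : F.obj (Abelian.image f) ≅ Abelian.image (F.map f) :=
      PreservesKernel.iso F (cokernel.π f) ≪≫
        kernel.mapIso (F.map (cokernel.π f)) (cokernel.π (F.map f)) (Iso.refl _) cokIso
          (by simpa using hcok')
    have e : F.map (cokernel.π (kernel.ι f)) =
        cokernel.π (F.map (kernel.ι f)) ≫ (PreservesCokernel.iso F (kernel.ι f)).inv := by
      simp [PreservesCokernel.iso_inv]
    have h1 : F.map (Abelian.coimage.π f) ≫ coimIso.hom = Abelian.coimage.π (F.map f) := by
      show F.map (cokernel.π (kernel.ι f)) ≫ _ = _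
      rw [e]
      simp only [coimIso, Iso.trans_hom, Category.assoc, Iso.inv_hom_id_assoc]
      simp [Abelian.coimage.π, cokernel.mapIso]
    have h2 : imIso.hom ≫ Abelian.image.ι (F.map f) = F.map (Abelian.image.ι f) := by
      simp [imIso, Abelian.image.ι, PreservesKernel.iso_hom]
    have h2' : imIso.inv ≫ F.map (Abelian.image.ι f) = Abelian.image.ι (F.map f) := by
      rw [← h2]; simp
    haveI : Epi (F.map (Abelian.coimage.π f)) := by
      have : F.map (Abelian.coimage.π f) = Abelian.coimage.π (F.map f) ≫ coimIso.inv := by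
        rw [← h1]; simp
      rw [this]; exact epi_comp _ _
    haveI : Mono (F.map (Abelian.image.ι f)) := by
      rw [← h2]; exact mono_comp _ _
    have key : F.map (Abelian.coimageImageComparison f) =
        coimIso.hom ≫ Abelian.coimageImageComparison (F.map f) ≫ imIso.inv := by
      rw [← cancel_epi (F.map (Abelian.coimage.π f)), ← cancel_mono (F.map (Abelian.image.ι f))]
      simp only [Category.assoc]
      rw [reassoc_of% h1, h2', ← F.map_comp, ← F.map_comp,
        Abelian.coimage_image_factorisation, Abelian.coimage_image_factorisation]
    have : IsIso (F.map (Abelian.coimageImageComparison f)) := by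
      rw [key]; infer_instance
    exact isIso_of_reflects_iso (Abelian.coimageImageComparison f) F
  exact ⟨Abelian.ofCoimageImageComparisonIsIso⟩
end

section
/- Under these hypotheses, the functor F is exact: for every pair of composable morphisms f : X → Y and g : Y → Z in A with g∘f = 0 and with image(f) = kernel(g) as subobjects of Y (where image(f) means ker(coker(f))), the sequence F(X) → F(Y) → F(Z) is exact in B, i.e., the image of F(f) equals the kernel of F(g). -/
open CategoryTheory CategoryTheory.Limits

/-- Let `A` be an additive category with kernels and cokernels, `B` an abelian category, and
`F : A ⥤ B` an additive faithful functor which preserves kernels and cokernels and reflects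
isomorphisms.  Then `F` is exact: whenever `f : X ⟶ Y` and `g : Y ⟶ Z` satisfy `f ≫ g = 0`
and `image f = kernel g` as subobjects of `Y` (where `image f` means `ker (coker f)`),
the image of `F.map f` equals the kernel of `F.map g`. -/
theorem functor_exact_of_faithful_functor_to_abelian
    {A : Type*} [Category A] [Preadditive A] [HasFiniteBiproducts A]
    [HasKernels A] [HasCokernels A]
    {B : Type*} [Category B] [Abelian B]
    (F : A ⥤ B) [F.Additive] [F.Faithful] [F.ReflectsIsomorphisms]
    (hker : ∀ {X Y : A} (f : X ⟶ Y), PreservesLimit (parallelPair f 0) F)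
    (hcoker : ∀ {X Y : A} (f : X ⟶ Y), PreservesColimit (parallelPair f 0) F)
    {X Y Z : A} (f : X ⟶ Y) (g : Y ⟶ Z) (w : f ≫ g = 0)
    (him : kernelSubobject (cokernel.π f) = kernelSubobject g) :
    imageSubobject (F.map f) = kernelSubobject (F.map g) := by
  have := hker g
  have := hcoker f
  -- in `A`: the kernel of `g` composes to zero with the cokernel projection of `f`
  have harr : (kernelSubobject g).arrow ≫ cokernel.π f = 0 := by
    rw [← him]; exact kernelSubobject_arrow_comp (cokernel.π f)
  have hA : kernel.ι g ≫ cokernel.π f = 0 := by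
    have : kernel.ι g = (kernelSubobjectIso g).inv ≫ (kernelSubobject g).arrow := by simp
    rw [this, Category.assoc, harr, comp_zero]
  -- transfer to `B` via the comparison isomorphisms
  have hkι : kernelComparison g F ≫ kernel.ι (F.map g) = F.map (kernel.ι g) :=
    kernelComparison_comp_ι g F
  have hcπ : cokernel.π (F.map f) ≫ cokernelComparison f F = F.map (cokernel.π f) :=
    π_comp_cokernelComparison f F
  have hB : kernel.ι (F.map g) ≫ cokernel.π (F.map f) = 0 := by
    have h1 : kernel.ι (F.map g) = inv (kernelComparison g F) ≫ F.map (kernel.ι g) := by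
      rw [← hkι, IsIso.inv_hom_id_assoc]
    have h2 : cokernel.π (F.map f) = F.map (cokernel.π f) ≫ inv (cokernelComparison f F) := by
      rw [← hcπ, Category.assoc, IsIso.hom_inv_id, Category.comp_id]
    rw [h1, h2, Category.assoc, ← F.map_comp_assoc, hA, F.map_zero, zero_comp, comp_zero]
  -- conclude exactness of the short complex `F X ⟶ F Y ⟶ F Z`
  let S : ShortComplex B := ShortComplex.mk (F.map f) (F.map g)
    (by rw [← F.map_comp, w, F.map_zero])
  have hS : S.Exact := (S.exact_iff_kernel_ι_comp_cokernel_π_zero).2 hB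
  exact (S.exact_iff_image_eq_kernel).1 hS
end

section
/- Let X and Y be objects of C and let f₁, f₂, …, f_n ∈ Hom_C(X,Y) be nonzero morphisms. If the linear maps F(f₁), …, F(f_n) are linearly dependent over K in Hom_K(F(X),F(Y)), then f₁, …, f_n are linearly dependent over K₀ in Hom_C(X,Y). -/
/-!
Transposing along the duality `(X ⟶ Y) ≃ (𝟙 ⟶ Y ⊗ Xᘁ)`, which `F` respects, reduces the claim to
morphisms `g₁, …, gₙ : 𝟙 ⟶ V`. The unit is simple because `F(𝟙)` is a line, so by induction on `n`
every nonzero subobject of `𝟙ⁿ` receives a nonzero map from `𝟙`. Hence if the `gᵢ` are independent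
over `K₀ = End(𝟙)`, then `(g₁, …, gₙ) : 𝟙ⁿ ⟶ V` is a monomorphism: the coordinates of a nonzero
map from `𝟙` into its kernel would form a relation among the `gᵢ`. As `F` is left exact, `F` of
this monomorphism is injective, so the `F(gᵢ)`, its restrictions to the coordinate lines of
`F(𝟙)ⁿ`, are independent over `K`.
-/

open CategoryTheory MonoidalCategory Limits

attribute [local instance] Abelian.hasFiniteBiproducts

theorem FGModuleCat.simple_of_finrank_eq_one {K : Type*} [Field K] {V : FGModuleCat K}
    (h : Module.finrank K V = 1) : Simple V :=
  have : Simple ((forget₂ (FGModuleCat K) (ModuleCat K)).obj V) :=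
    _root_.simple_of_finrank_eq_one h
  Functor.simple_of_simple_obj (forget₂ (FGModuleCat K) (ModuleCat K)) V

instance FGModuleCat.simple_unit {K : Type*} [Field K] : Simple (𝟙_ (FGModuleCat K)) :=
  FGModuleCat.simple_of_finrank_eq_one (Module.finrank_self K)

namespace CategoryTheory

theorem Functor.simple_unit_of_faithful {C D : Type*} [Category C] [HasZeroMorphisms C]
    [Balanced C] [MonoidalCategory C] [Category D] [HasZeroMorphisms D] [MonoidalCategory D]
    [Simple (𝟙_ D)] (F : C ⥤ D) [F.Monoidal] [F.Faithful] [F.PreservesZeroMorphisms]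
    [F.PreservesMonomorphisms] : Simple (𝟙_ C) :=
  have : Simple (F.obj (𝟙_ C)) := Simple.of_iso (Functor.Monoidal.εIso F).symm
  F.simple_of_simple_obj _

theorem monoidalLinear_of_faithful_of_map_smul {R S : Type*} [CommSemiring R] [Semiring S]
    [Algebra R S] {C D : Type*} [Category C] [Preadditive C] [Linear R C] [MonoidalCategory C]
    [MonoidalPreadditive C] [Category D] [Preadditive D] [Linear S D] [MonoidalCategory D]
    [MonoidalPreadditive D] [MonoidalLinear S D] (F : C ⥤ D) [F.Monoidal] [F.Faithful]
    (hF : ∀ (a : R) ⦃X Y : C⦄ (f : X ⟶ Y), F.map (a • f) = algebraMap R S a • F.map f) :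
    MonoidalLinear R C where
  whiskerLeft_smul X Y Z a f := F.map_injective <| by
    rw [Functor.Monoidal.map_whiskerLeft, hF, hF, Functor.Monoidal.map_whiskerLeft]
    simp
  smul_whiskerRight a Y Z f X := F.map_injective <| by
    rw [Functor.Monoidal.map_whiskerRight, hF, hF, Functor.Monoidal.map_whiskerRight]
    simp

section Sandwich

variable (R S : Type*) [Semiring R] [Semiring S] {C D : Type*}
  [Category C] [Preadditive C] [Linear R C] [MonoidalCategory C] [MonoidalPreadditive C]
  [MonoidalLinear R C] [Category D] [Preadditive D] [Linear S D] [MonoidalCategory D]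
  [MonoidalPreadditive D] [MonoidalLinear S D]

def sandwichWhiskerRight {A B P Q W : C} (a : A ⟶ P ⊗ W) (b : Q ⊗ W ⟶ B) :
    (P ⟶ Q) →ₗ[R] (A ⟶ B) where
  toFun φ := a ≫ φ ▷ W ≫ b
  map_add' φ ψ := by simp [MonoidalPreadditive.add_whiskerRight]
  map_smul' r φ := by simp

@[simp]
theorem sandwichWhiskerRight_apply {A B P Q W : C} (a : A ⟶ P ⊗ W) (b : Q ⊗ W ⟶ B)
    (φ : P ⟶ Q) : sandwichWhiskerRight R a b φ = a ≫ φ ▷ W ≫ b :=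
  rfl

theorem map_sandwichWhiskerRight (F : C ⥤ D) [F.Monoidal] {A B P Q W : C}
    (a : A ⟶ P ⊗ W) (b : Q ⊗ W ⟶ B) (φ : P ⟶ Q) :
    F.map (sandwichWhiskerRight R a b φ) =
      sandwichWhiskerRight S (F.map a ≫ Functor.OplaxMonoidal.δ F P W)
        (Functor.LaxMonoidal.μ F Q W ≫ F.map b) (F.map φ) := by
  simp only [sandwichWhiskerRight_apply, Functor.map_comp, Functor.Monoidal.map_whiskerRight,
    Category.assoc]

end Sandwich

theorem coevaluation_comp_whiskerRight_injective {C : Type*} [Category C] [MonoidalCategory C]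
    {X X' Y : C} [ExactPairing X X'] :
    Function.Injective (fun f : X ⟶ Y => η_ X X' ≫ f ▷ X') := by
  have h_eq (f : X ⟶ Y) :
      η_ X X' ≫ f ▷ X' = tensorRightHomEquiv (𝟙_ C) X X' Y ((λ_ X).hom ≫ f) := by
    simp [tensorRightHomEquiv, unitors_equal]
  intro f g h
  simpa [h_eq] using h

theorem Limits.biproduct.lift_castSucc_comp_desc_castSucc {C : Type*} [Category C]
    [Preadditive C] [HasFiniteBiproducts C] {m : ℕ} {f : Fin (m + 1) → C} {W : C} (g : W ⟶ ⨁ f)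
    (hg : g ≫ biproduct.π f (Fin.last m) = 0) :
    biproduct.lift (fun i : Fin m => g ≫ biproduct.π f i.castSucc) ≫
      biproduct.desc (fun i : Fin m => biproduct.ι f i.castSucc) = g := by
  conv_rhs => rw [← Category.comp_id g, ← biproduct.total, Preadditive.comp_sum,
    Fin.sum_univ_castSucc, reassoc_of% hg, zero_comp, add_zero]
  simp only [biproduct.lift_desc, Category.assoc]

theorem exists_ne_zero_of_mono_biproduct {C : Type*} [Category C] [Abelian C] {S : C}
    [Simple S] :
    ∀ {m : ℕ} {W : C} (k : W ⟶ ⨁ fun _ : Fin m => S) [Mono k], k ≠ 0 → ∃ s : S ⟶ W, s ≠ 0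
  | 0, _, k, _, hk => absurd (biproduct.hom_ext _ _ fun j => j.elim0) hk
  | m + 1, W, k, _, hk => by
    -- Either `ker p` is a nonzero subobject of `Sᵐ`, or `p` is a nonzero mono into `S`.
    set p := k ≫ biproduct.π _ (Fin.last m)
    set k' := biproduct.lift fun i : Fin m =>
      (kernel.ι p ≫ k) ≫ biproduct.π (fun _ => S) i.castSucc
    have hk' : k' ≫ biproduct.desc (fun i : Fin m => biproduct.ι (fun _ => S) i.castSucc) =
        kernel.ι p ≫ k :=
      biproduct.lift_castSucc_comp_desc_castSucc (kernel.ι p ≫ k)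
        (by rw [Category.assoc]; exact kernel.condition p)
    have : Mono k' := mono_of_mono_fac hk'
    by_cases hk'0 : k' = 0
    · have : Mono p := Abelian.mono_of_kernel_ι_eq_zero _ <| zero_of_comp_mono k <| by
        rw [← hk', hk'0, zero_comp]
      have hp : p ≠ 0 := fun hp => hk <| by
        have : Mono (0 : W ⟶ S) := hp ▸ ‹Mono p›
        exact (IsZero.of_mono_zero W S).eq_of_src _ _
      have := isIso_of_mono_of_nonzero hp
      exact ⟨inv p, fun h => id_nonzero S (by rw [← IsIso.inv_hom_id p, h, zero_comp])⟩
    · obtain ⟨s, hs⟩ := exists_ne_zero_of_mono_biproduct k' hk'0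
      exact ⟨s ≫ kernel.ι p, fun h => hs (zero_of_comp_mono _ h)⟩

theorem mono_biproduct_desc_of_linearIndependent {K₀ : Type*} [Ring K₀] {C : Type*}
    [Category C] [Abelian C] [Linear K₀ C] {S V : C} [Simple S]
    (hEnd : Function.Surjective (fun a : K₀ => a • 𝟙 S)) {n : ℕ} {g : Fin n → (S ⟶ V)}
    (hg : LinearIndependent K₀ g) : Mono (biproduct.desc g) := by
  refine Abelian.mono_of_kernel_ι_eq_zero _ (by_contra fun hι => ?_)
  obtain ⟨s, hs⟩ := exists_ne_zero_of_mono_biproduct _ hι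
  choose a ha using fun i => hEnd (s ≫ kernel.ι _ ≫ biproduct.π _ i)
  have hs_eq : s ≫ kernel.ι _ = biproduct.lift fun i => a i • 𝟙 S := by
    ext i; simp [ha]
  have hrel : ∑ i, a i • g i = 0 :=
    calc ∑ i, a i • g i = (biproduct.lift fun i => a i • 𝟙 S) ≫ biproduct.desc g := by
          simp [biproduct.lift_desc]
      _ = 0 := by rw [← hs_eq, Category.assoc, kernel.condition, comp_zero]
  have ha0 := Fintype.linearIndependent_iff.mp hg a hrel
  exact hs <| zero_of_comp_mono (kernel.ι _) <| by
    rw [hs_eq]; ext; simp [ha0]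

theorem linearIndependent_map_of_mono_biproduct_desc {K : Type*} [Field K] {C D : Type*}
    [Category C] [Preadditive C] [HasFiniteBiproducts C] [Category D] [Preadditive D]
    [Linear K D] (F : C ⥤ D) [F.Additive] [F.Faithful] [F.PreservesMonomorphisms] {S V : C}
    (hS : 𝟙 S ≠ 0) {n : ℕ} {g : Fin n → (S ⟶ V)} [Mono (biproduct.desc g)] :
    LinearIndependent K (fun i => F.map (g i)) := by
  have hFS : 𝟙 (F.obj S) ≠ 0 := by rwa [← F.map_id, Ne, F.map_eq_zero_iff]
  have hι : LinearIndependent K (fun i => F.map (biproduct.ι (fun _ : Fin n => S) i)) := by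
    refine Fintype.linearIndependent_iff.mpr fun c hc j => ?_
    simpa [Preadditive.sum_comp, ← F.map_comp, biproduct.ι_π, apply_ite F.map, hFS] using
      congrArg (· ≫ F.map (biproduct.π (fun _ : Fin n => S) j)) hc
  have hinj : LinearMap.ker (Linear.rightComp K (F.obj S) (F.map (biproduct.desc g))) = ⊥ :=
    LinearMap.ker_eq_bot.mpr fun φ ψ h => (cancel_mono (F.map (biproduct.desc g))).mp h
  simpa [Function.comp_def, ← F.map_comp] using hι.map' _ hinj

end CategoryTheory

theorem linearDependent_over_K₀_of_linearDependent_over_K_general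
    {K₀ K : Type} [Field K₀] [Field K] [Algebra K₀ K]
    {C : Type*} [Category C] [Abelian C] [Linear K₀ C]
    [MonoidalCategory C] [SymmetricCategory C] [RigidCategory C]
    (hEnd : Function.Bijective (fun a : K₀ => a • (𝟙 (𝟙_ C))))
    (F : C ⥤ FGModuleCat K) [F.Braided] [F.Additive] [F.Faithful]
    [Limits.PreservesFiniteLimits F]
    (hFlin : ∀ (a : K₀) ⦃X Y : C⦄ (f : X ⟶ Y),
      F.map (a • f) = (algebraMap K₀ K a) • F.map f)
    {X Y : C} {n : ℕ} (f : Fin n → (X ⟶ Y))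
    (hdep : ¬ LinearIndependent K (fun i : Fin n => F.map (f i))) :
    ¬ LinearIndependent K₀ f := by
  have := monoidalPreadditive_of_faithful F
  have := monoidalLinear_of_faithful_of_map_smul F hFlin
  have := F.simple_unit_of_faithful
  intro hf
  let transpose := sandwichWhiskerRight K₀ (η_ X Xᘁ) (𝟙 (Y ⊗ Xᘁ))
  have h_transpose : LinearIndependent K₀ fun i => transpose (f i) :=
    hf.map' transpose <| LinearMap.ker_eq_bot.mpr fun f g h =>
      coevaluation_comp_whiskerRight_injective (by simpa [transpose] using h)
  have := mono_biproduct_desc_of_linearIndependent hEnd.surjective h_transpose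
  refine hdep (.of_comp (sandwichWhiskerRight K
    (F.map (η_ X Xᘁ) ≫ Functor.OplaxMonoidal.δ F X Xᘁ)
    (Functor.LaxMonoidal.μ F Y Xᘁ ≫ F.map (𝟙 (Y ⊗ Xᘁ)))) ?_)
  convert linearIndependent_map_of_mono_biproduct_desc (K := K) F (id_nonzero (𝟙_ C))
    (g := fun i => transpose (f i)) using 1
  funext i
  exact (map_sandwichWhiskerRight K₀ K F _ _ (f i)).symm

/-- Let `K₀ ⊆ K` be fields of characteristic zero, `C` a `K₀`-linear abelian symmetric monoidal
rigid category with `End(𝟙) = K₀`, and `F : C ⥤ Vec_K` an exact faithful additive `K₀`-linear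
symmetric monoidal (fiber) functor.  If `f₁, …, f_n : X ⟶ Y` are nonzero morphisms of `C` such
that `F(f₁), …, F(f_n)` are linearly dependent over `K`, then `f₁, …, f_n` are linearly
dependent over `K₀`. -/
theorem linearDependent_over_K₀_of_linearDependent_over_K
    {K₀ K : Type} [Field K₀] [Field K] [Algebra K₀ K] [CharZero K₀] [CharZero K]
    {C : Type*} [Category C] [Abelian C] [Linear K₀ C]
    [MonoidalCategory C] [SymmetricCategory C] [RigidCategory C]
    (hEnd : Function.Bijective (fun a : K₀ => a • (𝟙 (𝟙_ C))))
    (F : C ⥤ FGModuleCat K) [F.Braided] [F.Additive] [F.Faithful]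
    [Limits.PreservesFiniteLimits F] [Limits.PreservesFiniteColimits F]
    (hFlin : ∀ (a : K₀) ⦃X Y : C⦄ (f : X ⟶ Y),
      F.map (a • f) = (algebraMap K₀ K a) • F.map f)
    {X Y : C} {n : ℕ} (f : Fin n → (X ⟶ Y)) (hf : ∀ i, f i ≠ 0)
    (hdep : ¬ LinearIndependent K (fun i : Fin n => F.map (f i))) :
    ¬ LinearIndependent K₀ f :=
  linearDependent_over_K₀_of_linearDependent_over_K_general hEnd F hFlin f hdep
end

section
/- If a, b ∈ K with a, b ∉ {0, 1} and the non-unital K-algebras W_a and W_b are isomorphic as (non-unital, associative) K-algebras, then a = b. -/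
/-- The multiplication of the 3-dimensional non-unital associative `K`-algebra `W_c` with basis
`x = e₀`, `y = e₁`, `z = e₂` and multiplication determined by
`xz = zx = yz = zy = z² = 0`, `x² = y² = xy = z`, `yx = c·z`. -/
def wMul (K : Type*) [Field K] (c : K) (u v : Fin 3 → K) : Fin 3 → K :=
  fun i => if i = 2 then u 0 * v 0 + u 0 * v 1 + c * (u 1 * v 0) + u 1 * v 1 else 0

/-- If `a, b ∉ {0, 1}` and the non-unital `K`-algebras `W_a` and `W_b` are isomorphic (i.e.
there is a `K`-linear equivalence of the underlying spaces intertwining the multiplications),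
then `a = b`. -/
theorem wMul_iso_iff {K : Type*} [Field K] [CharZero K] {a b : K}
    (ha0 : a ≠ 0) (ha1 : a ≠ 1) (hb0 : b ≠ 0) (hb1 : b ≠ 1)
    (h : ∃ φ : (Fin 3 → K) ≃ₗ[K] (Fin 3 → K),
      ∀ u v : Fin 3 → K, φ (wMul K a u v) = wMul K b (φ u) (φ v)) :
    a = b := by
  obtain ⟨φ, hφ⟩ := h
  set z : Fin 3 → K := fun i => if i = 2 then 1 else 0 with hzdef
  have hxx := hφ ![1,0,0] ![1,0,0]
  have hyy := hφ ![0,1,0] ![0,1,0]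
  have hxy := hφ ![1,0,0] ![0,1,0]
  have hyx := hφ ![0,1,0] ![1,0,0]
  have hz1 : wMul K a ![1,0,0] ![1,0,0] = z := by
    funext i; simp [wMul, hzdef]
  have hz2 : wMul K a ![0,1,0] ![0,1,0] = z := by
    funext i; simp [wMul, hzdef]
  have hz3 : wMul K a ![1,0,0] ![0,1,0] = z := by
    funext i; simp [wMul, hzdef]
  have hz4 : wMul K a ![0,1,0] ![1,0,0] = a • z := by
    funext i; simp [wMul, hzdef, Pi.smul_apply, smul_eq_mul, mul_ite]
  rw [hz1] at hxx
  rw [hz2] at hyy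
  rw [hz3] at hxy
  rw [hz4, map_smul] at hyx
  set t : K := (φ z) 2 with htdef
  set P0 : K := φ ![1,0,0] 0
  set P1 : K := φ ![1,0,0] 1
  set Q0 : K := φ ![0,1,0] 0
  set Q1 : K := φ ![0,1,0] 1
  have e1 : t = P0 * P0 + P0 * P1 + b * (P1 * P0) + P1 * P1 := by
    have := congrFun hxx 2; simpa [wMul] using this
  have e2 : t = Q0 * Q0 + Q0 * Q1 + b * (Q1 * Q0) + Q1 * Q1 := by
    have := congrFun hyy 2; simpa [wMul] using this
  have e3 : t = P0 * Q0 + P0 * Q1 + b * (P1 * Q0) + P1 * Q1 := by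
    have := congrFun hxy 2; simpa [wMul] using this
  have e4 : a * t = Q0 * P0 + Q0 * P1 + b * (Q1 * P0) + Q1 * P1 := by
    have := congrFun hyx 2; simpa [wMul, Pi.smul_apply, smul_eq_mul] using this
  have ht0 : t ≠ 0 := by
    intro ht
    have hz0 : z = 0 := by
      apply φ.injective
      rw [map_zero, hxx]
      funext i
      simp only [wMul, Pi.zero_apply]
      split
      · linear_combination ht - e1
      · rfl
    have := congrFun hz0 2
    simp [hzdef] at this
  set D : K := P0 * Q1 - P1 * Q0 with hD
  have hskew : (a - 1) * t = (b - 1) * D := by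
    linear_combination e4 - e3
  have hA : t * t = (P0 * P0 + P0 * P1 + b * (P1 * P0) + P1 * P1) *
      (Q0 * Q0 + Q0 * Q1 + b * (Q1 * Q0) + Q1 * Q1) := by
    linear_combination t * e2 + (Q0 * Q0 + Q0 * Q1 + b * (Q1 * Q0) + Q1 * Q1) * e1
  have hB : a * (t * t) = (P0 * Q0 + P0 * Q1 + b * (P1 * Q0) + P1 * Q1) *
      (Q0 * P0 + Q0 * P1 + b * (Q1 * P0) + Q1 * P1) := by
    linear_combination t * e4 + (Q0 * P0 + Q0 * P1 + b * (Q1 * P0) + Q1 * P1) * e3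
  have hdet : t * t * (1 - a) = D * D * (1 - b) := by
    linear_combination hA - hB
  have hDne : D ≠ 0 := by
    intro hD0
    rw [hD0, mul_zero] at hskew
    rcases mul_eq_zero.mp hskew with h | h
    · exact ha1 (by linear_combination h)
    · exact ht0 h
  have htD : t = D := by
    have key : (1 - b) * D * (t - D) = 0 := by
      linear_combination t * hskew + hdet
    rcases mul_eq_zero.mp key with h | h
    · rcases mul_eq_zero.mp h with h | h
      · exact absurd (by linear_combination -h : b = 1) hb1
      · exact absurd h hDne
    · linear_combination h
  have hfin : (1 - a) * t = (1 - b) * t := by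
    rw [htD] at hskew ⊢
    linear_combination -hskew
  have := mul_right_cancel₀ ht0 hfin
  linear_combination -this
end

section
/- There exist matrices X, Y ∈ M_n(K) such that the n² matrices X^i·Y^j, for 0 ≤ i ≤ n−1 and 0 ≤ j ≤ n−1, form a K-basis of M_n(K). -/
/-!
Take `X = diag(0, 1, …, n - 1)` and `Y` the permutation matrix of the `n`-cycle `k ↦ k + 1`.
As the diagonal entries of `X` are distinct, Lagrange interpolation writes every diagonal matrix
`D` as a polynomial of degree `< n` in `X`, so the span of the `Xⁱ Yʲ` contains every `D Yʲ`.
The matrix unit `E_ab` is `E_aa Yʲ` for the `j < n` that moves `a` to `b` along the cycle, so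
these `n²` matrices span `Mₙ(K)`, and a spanning family of `dim Mₙ(K)` vectors is a basis.
-/

open Matrix Polynomial Function

theorem isCycleOn_finRotate (n : ℕ) : (finRotate n).IsCycleOn Set.univ := by
  rcases lt_or_ge n 2 with hn | hn
  · have : Subsingleton (Fin n) := Fin.subsingleton_iff_le_one.mpr (by omega)
    exact Equiv.Perm.isCycleOn_of_subsingleton _ _
  · convert (isCycle_finRotate_of_le hn).isCycleOn
    exact (Set.eq_univ_of_forall fun x =>
      Equiv.Perm.mem_support.mp (support_finRotate_of_le hn ▸ Finset.mem_univ x)).symm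

theorem Polynomial.aeval_mem_span_pow_of_degree_lt {R A : Type*} [CommSemiring R] [Semiring A]
    [Algebra R A] (x : A) {p : R[X]} {n : ℕ} (hp : p.degree < n) :
    aeval x p ∈ Submodule.span R (Set.range fun i : Fin n => x ^ (i : ℕ)) := by
  rcases eq_or_ne p 0 with rfl | hp0
  · simp
  rw [aeval_eq_sum_range' ((natDegree_lt_iff_degree_lt hp0).mpr hp),
    ← Fin.sum_univ_eq_sum_range (fun i => p.coeff i • x ^ i)]
  exact Submodule.sum_mem _ fun i _ => Submodule.smul_mem _ _ (Submodule.subset_span ⟨i, rfl⟩)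

namespace Matrix

variable {ι K : Type*} [Fintype ι] [DecidableEq ι]

theorem permMatrix_pow [Semiring K] (σ : Equiv.Perm ι) (j : ℕ) :
    (σ ^ j).permMatrix K = σ.permMatrix K ^ j := by
  induction j with
  | zero => simp
  | succ j ih => rw [pow_succ, permMatrix_mul, ih, pow_succ']

theorem diagonal_single_one_mul_permMatrix [Semiring K] (σ : Equiv.Perm ι) (a : ι) :
    diagonal (Pi.single a 1) * σ.permMatrix K = single a (σ a) 1 := by
  ext k l
  by_cases hk : k = a
  · subst hk
    simp [PEquiv.toMatrix_apply, single_apply, eq_comm]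
  · simp [hk, PEquiv.toMatrix_apply, Ne.symm hk]

theorem aeval_diagonal [CommSemiring K] (v : ι → K) (p : K[X]) :
    aeval (diagonal v) p = diagonal fun k => p.eval (v k) := by
  rw [← diagonalAlgHom_apply (R := K), aeval_algHom_apply, aeval_pi_apply]
  rfl

variable [Field K]

theorem diagonal_mem_span_pow_diagonal {v : ι → K} (hv : Injective v) {n : ℕ}
    (hn : Fintype.card ι ≤ n) (w : ι → K) :
    diagonal w ∈ Submodule.span K (Set.range fun i : Fin n => diagonal v ^ (i : ℕ)) := by
  have hw : diagonal w = aeval (diagonal v) (Lagrange.interpolate Finset.univ v w) := by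
    rw [aeval_diagonal]
    congr 1 with k
    exact (Lagrange.eval_interpolate_at_node w hv.injOn (Finset.mem_univ k)).symm
  rw [hw]
  refine aeval_mem_span_pow_of_degree_lt _ ((Lagrange.degree_interpolate_lt w hv.injOn).trans_le ?_)
  exact_mod_cast hn

theorem span_diagonal_pow_mul_permMatrix_pow_eq_top {v : ι → K} (hv : Injective v)
    {σ : Equiv.Perm ι} (hσ : σ.IsCycleOn Set.univ) {n : ℕ} (hn : Fintype.card ι ≤ n) :
    Submodule.span K (Set.range fun p : Fin n × Fin n =>
      diagonal v ^ (p.1 : ℕ) * σ.permMatrix K ^ (p.2 : ℕ)) = ⊤ := by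
  rw [eq_top_iff, ← (stdBasis K ι ι).span_eq, Submodule.span_le]
  rintro _ ⟨⟨a, b⟩, rfl⟩
  rw [← Finset.coe_univ] at hσ
  obtain ⟨j, hj, rfl⟩ := hσ.exists_pow_eq (Finset.mem_univ a) (Finset.mem_univ b)
  rw [SetLike.mem_coe, stdBasis_eq_single, ← diagonal_single_one_mul_permMatrix, permMatrix_pow]
  have hrow := Submodule.mem_map_of_mem (f := LinearMap.mulRight K (σ.permMatrix K ^ j))
    (diagonal_mem_span_pow_diagonal hv hn (Pi.single a 1))
  rw [Submodule.map_span, ← Set.range_comp] at hrow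
  refine Submodule.span_mono ?_ hrow
  rintro _ ⟨i, rfl⟩
  exact ⟨(i, ⟨j, hj.trans_le hn⟩), rfl⟩

end Matrix

theorem exists_two_generic_matrices_powers_basis_general
    (K : Type*) [Field K] [CharZero K] (n : ℕ) :
    ∃ X Y : Matrix (Fin n) (Fin n) K,
      LinearIndependent K
        (fun p : Fin n × Fin n => X ^ (p.1 : ℕ) * Y ^ (p.2 : ℕ)) ∧
      Submodule.span K
        (Set.range (fun p : Fin n × Fin n => X ^ (p.1 : ℕ) * Y ^ (p.2 : ℕ))) = ⊤ := by
  have hspan := span_diagonal_pow_mul_permMatrix_pow_eq_top (K := K)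
    (Nat.cast_injective.comp Fin.val_injective) (isCycleOn_finRotate n) (Fintype.card_fin n).le
  refine ⟨_, _, linearIndependent_of_top_le_span_of_card_eq_finrank hspan.ge ?_, hspan⟩
  simp [Module.finrank_matrix]

/-- There exist matrices `X, Y ∈ Mₙ(K)` such that the `n²` matrices `Xⁱ·Yʲ`,
`0 ≤ i, j ≤ n − 1`, form a `K`-basis of `Mₙ(K)`. -/
theorem exists_two_generic_matrices_powers_basis
    (K : Type*) [Field K] [CharZero K] (n : ℕ) (hn : 0 < n) :
    ∃ X Y : Matrix (Fin n) (Fin n) K,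
      LinearIndependent K
        (fun p : Fin n × Fin n => X ^ (p.1 : ℕ) * Y ^ (p.2 : ℕ)) ∧
      Submodule.span K
        (Set.range (fun p : Fin n × Fin n => X ^ (p.1 : ℕ) * Y ^ (p.2 : ℕ))) = ⊤ :=
  exists_two_generic_matrices_powers_basis_general K n
end
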